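/- arXiv:2007.07575 — 5 statements merged into one kernel-verified Lean document; each statement's English description precedes it below -/
import Mathlib

section
/- The domination relation on antichains of a finite DAG is antisymmetric: if A and B are antichains of the same size such that A dominates B and B dominates A, then A = B. -/
open Relation

/-- A directed graph (edge relation `E`) is acyclic. -/
def Acyclic {V : Type*} (E : V → V → Prop) : Prop := ∀ v, ¬ TransGen E v v

/-- `A` is an antichain: its vertices are pairwise non-reachable
(reachability = reflexive-transitive closure of `E`). -/
def IsAC {V : Type*} (E : V → V → Prop) (A : Finset V) : Prop :=
  ∀ a ∈ A, ∀ b ∈ A, a ≠ b → ¬ ReflTransGen E a b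

/-- `B` dominates `A`: same size, and every vertex of `B` is reachable from some vertex of `A`. -/
def Dom {V : Type*} (E : V → V → Prop) (B A : Finset V) : Prop :=
  B.card = A.card ∧ ∀ b ∈ B, ∃ a ∈ A, ReflTransGen E a b

/-- A frontier antichain: an antichain not dominated by any other antichain. -/
def Frontier {V : Type*} (E : V → V → Prop) (A : Finset V) : Prop :=
  IsAC E A ∧ ∀ B : Finset V, IsAC E B → B ≠ A → ¬ Dom E B A

/-- The identity order on `Fin n` is a topological order for `E`. -/
def Topo {n : ℕ} (E : Fin n → Fin n → Prop) : Prop := ∀ u v, E u v → (u : ℕ) < (v : ℕ)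

/-- The edge relation of the induced subgraph `G_i` on the first `i` vertices. -/
def Erest {n : ℕ} (E : Fin n → Fin n → Prop) (i : ℕ) (u v : Fin n) : Prop :=
  E u v ∧ (u : ℕ) < i ∧ (v : ℕ) < i

/-- `A` is a frontier antichain of the induced subgraph `G_i` on the first `i` vertices. -/
def FrontierIn {n : ℕ} (E : Fin n → Fin n → Prop) (i : ℕ) (A : Finset (Fin n)) : Prop :=
  (∀ a ∈ A, (a : ℕ) < i) ∧ IsAC (Erest E i) A ∧
  ∀ B : Finset (Fin n), (∀ b ∈ B, (b : ℕ) < i) → IsAC (Erest E i) B → B ≠ A →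
    ¬ Dom (Erest E i) B A

/-- The support `S_i`: union of all frontier antichains of `G_i`. -/
def SupportIn {n : ℕ} (E : Fin n → Fin n → Prop) (i : ℕ) : Set (Fin n) :=
  {v | ∃ A : Finset (Fin n), FrontierIn E i A ∧ v ∈ A}

theorem Acyclic.reflTransGen_antisymm {V : Type*} {E : V → V → Prop} (hE : Acyclic E)
    {x y : V} (hxy : ReflTransGen E x y) (hyx : ReflTransGen E y x) : x = y := by
  by_contra hne
  exact hE y (TransGen.trans_right hyx
    ((reflTransGen_iff_eq_or_transGen.mp hxy).resolve_left (Ne.symm hne)))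

/-- Going from `a ∈ A` back into `B` and then back into `A` must return to `a` since `A` is an
antichain, and acyclicity then collapses the round trip. -/
theorem IsAC.subset_of_reachable_both_ways {V : Type*} {E : V → V → Prop} (hE : Acyclic E)
    {A B : Finset V} (hA : IsAC E A) (hAB : ∀ a ∈ A, ∃ b ∈ B, ReflTransGen E b a)
    (hBA : ∀ b ∈ B, ∃ a ∈ A, ReflTransGen E a b) : A ⊆ B := by
  intro a ha
  obtain ⟨b, hb, hba⟩ := hAB a ha
  obtain ⟨a', ha', ha'b⟩ := hBA b hb
  obtain rfl : a' = a := by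
    by_contra hne
    exact hA a' ha' a ha hne (ha'b.trans hba)
  rwa [← hE.reflTransGen_antisymm hba ha'b]

theorem domination_antisymm_general {V : Type*} (E : V → V → Prop) (hE : Acyclic E)
    (A B : Finset V) (hA : IsAC E A)
    (h1 : Dom E A B) (h2 : Dom E B A) : A = B :=
  Finset.eq_of_subset_of_card_le (hA.subset_of_reachable_both_ways hE h1.2 h2.2) h2.1.le

/-- domination is antisymmetric on antichains of a finite DAG. -/
theorem domination_antisymm {V : Type*} [Fintype V] (E : V → V → Prop) (hE : Acyclic E)
    (A B : Finset V) (hA : IsAC E A) (hB : IsAC E B)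
    (h1 : Dom E A B) (h2 : Dom E B A) : A = B :=
  domination_antisymm_general E hE A B hA h1 h2
end

section
/- The domination relation restricted to antichains of a fixed size n in a finite DAG is a partial order (reflexive, transitive, and antisymmetric). -/
open Relation

/-!
If antichains `A` and `B` dominate each other, each `a ∈ A` is reached from some `b ∈ B`,
which in turn is reached from some `a' ∈ A`; as `A` is an antichain, `a' = a`, and acyclicity
forces `b = a`. Hence `A ⊆ B`, and equal cardinalities give `A = B`.
-/

section

variable {V : Type*} {E : V → V → Prop}

theorem Acyclic.eq_of_reflTransGen (hE : Acyclic E) {a b : V}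
    (hab : ReflTransGen E a b) (hba : ReflTransGen E b a) : a = b := by
  rcases reflTransGen_iff_eq_or_transGen.mp hab with hba' | hab'
  · exact hba'.symm
  · exact (hE a (hab'.trans_left hba)).elim

theorem Dom.refl (E : V → V → Prop) (A : Finset V) : Dom E A A :=
  ⟨rfl, fun a ha => ⟨a, ha, .refl⟩⟩

theorem Dom.trans {A B C : Finset V} (hCB : Dom E C B) (hBA : Dom E B A) : Dom E C A := by
  refine ⟨hCB.1.trans hBA.1, fun c hc => ?_⟩
  obtain ⟨b, hb, hbc⟩ := hCB.2 c hc
  obtain ⟨a, ha, hab⟩ := hBA.2 b hb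
  exact ⟨a, ha, hab.trans hbc⟩

theorem Dom.subset_of_dom (hE : Acyclic E) {A B : Finset V} (hA : IsAC E A)
    (hAB : Dom E A B) (hBA : Dom E B A) : A ⊆ B := by
  intro a ha
  obtain ⟨b, hb, hba⟩ := hAB.2 a ha
  obtain ⟨a', ha', ha'b⟩ := hBA.2 b hb
  have ha'a : a' = a := by
    by_contra hne
    exact hA a' ha' a ha hne (ha'b.trans hba)
  subst ha'a
  rwa [hE.eq_of_reflTransGen ha'b hba]

theorem Dom.antisymm (hE : Acyclic E) {A B : Finset V} (hA : IsAC E A)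
    (hAB : Dom E A B) (hBA : Dom E B A) : A = B :=
  Finset.eq_of_subset_of_card_le (hAB.subset_of_dom hE hA hBA) hBA.1.le

end

theorem domination_partial_order_general {V : Type*} (E : V → V → Prop)
    (hE : Acyclic E) (m : ℕ) :
    (∀ A : Finset V, IsAC E A → A.card = m → Dom E A A) ∧
    (∀ A B C : Finset V, IsAC E A → IsAC E B → IsAC E C →
      A.card = m → B.card = m → C.card = m →
      Dom E C B → Dom E B A → Dom E C A) ∧
    (∀ A B : Finset V, IsAC E A → IsAC E B → A.card = m → B.card = m →
      Dom E A B → Dom E B A → A = B) :=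
  ⟨fun A _ _ => Dom.refl E A,
    fun _ _ _ _ _ _ _ _ _ hCB hBA => hCB.trans hBA,
    fun _ _ hA _ _ _ hAB hBA => hAB.antisymm hE hA hBA⟩

/-- domination on antichains of a fixed size `m` is a partial order. -/
theorem domination_partial_order {V : Type*} [Fintype V] (E : V → V → Prop)
    (hE : Acyclic E) (m : ℕ) :
    (∀ A : Finset V, IsAC E A → A.card = m → Dom E A A) ∧
    (∀ A B C : Finset V, IsAC E A → IsAC E B → IsAC E C →
      A.card = m → B.card = m → C.card = m →
      Dom E C B → Dom E B A → Dom E C A) ∧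
    (∀ A B : Finset V, IsAC E A → IsAC E B → A.card = m → B.card = m →
      Dom E A B → Dom E B A → A = B) :=
  domination_partial_order_general E hE m
end

section
/- If a DAG G of width k has a path cover P_1, ..., P_k of size k, then for every subset S of {1,...,k}, there is at most one frontier antichain of size |S| whose vertices lie exactly one on each path P_i with i in S. Consequently, G has at most 2^k frontier antichains. -/
open Relation

/-! If two frontier antichains `A`, `B` can be matched so that matched vertices lie on a common
path, then matched vertices are comparable, and taking the later vertex of each matched pair
gives an antichain `C` of the same size dominating both `A` and `B`; by maximality
`A = C = B`. Two vertices of an antichain never share a path, so after choosing a path `p v`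
through each vertex a frontier antichain `A` is matched path-wise with any other frontier
antichain meeting the same paths `A.image p`. Hence `A ↦ A.image p` is injective on frontier
antichains, which bounds their number by `2 ^ k`. -/

section

variable {V : Type*} {E : V → V → Prop}

theorem List.IsChain.reflTransGen_or {l : List V} (hl : l.IsChain E) {a b : V} (ha : a ∈ l)
    (hb : b ∈ l) : ReflTransGen E a b ∨ ReflTransGen E b a := by
  have hp : l.Pairwise (ReflTransGen E) :=
    List.isChain_iff_pairwise.mp (hl.imp fun _ _ => ReflTransGen.single)
  exact List.Pairwise.forall_of_forall_of_flip (R := fun x y => ReflTransGen E x y ∨ _)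
    (fun _ _ => Or.inl .refl) (hp.imp Or.inl) (hp.imp Or.inr) ha hb

theorem IsAC.eq_of_reflTransGen {A : Finset V} (hA : IsAC E A) {a b : V} (ha : a ∈ A)
    (hb : b ∈ A) (hab : ReflTransGen E a b) : a = b :=
  by_contra fun hne => hA a ha b hb hne hab

theorem IsAC.injOn_of_mem_chains {ι : Type*} {P : ι → List V} (hchain : ∀ i, (P i).IsChain E)
    {A : Finset V} (hA : IsAC E A) {p : V → ι} (hp : ∀ a ∈ A, a ∈ P (p a)) :
    Set.InjOn p A := by
  intro a ha b hb hab
  have hb' : b ∈ P (p a) := hab ▸ hp b hb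
  rcases (hchain (p a)).reflTransGen_or (hp a ha) hb' with h | h
  · exact hA.eq_of_reflTransGen ha hb h
  · exact (hA.eq_of_reflTransGen hb ha h).symm

theorem Frontier.eq_of_dom {A C : Finset V} (hA : Frontier E A) (hC : IsAC E C)
    (hCA : Dom E C A) : C = A :=
  by_contra fun hne => hA.2 C hC hne hCA

open Classical in
noncomputable def reachMax (E : V → V → Prop) (x y : V) : V :=
  if ReflTransGen E x y then y else x

theorem reachMax_eq_or (x y : V) : reachMax E x y = x ∨ reachMax E x y = y := by
  unfold reachMax; split_ifs <;> simp

theorem reflTransGen_reachMax_left (x y : V) : ReflTransGen E x (reachMax E x y) := by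
  unfold reachMax; split_ifs with h
  · exact h
  · exact .refl

theorem reflTransGen_reachMax_right {x y : V} (h : ReflTransGen E x y ∨ ReflTransGen E y x) :
    ReflTransGen E y (reachMax E x y) := by
  unfold reachMax; split_ifs with hxy
  · exact .refl
  · exact h.resolve_left hxy

theorem Frontier.eq_of_comparable_equiv {A B : Finset V} (hA : Frontier E A)
    (hB : Frontier E B) (e : A ≃ B)
    (he : ∀ x : A, ReflTransGen E x (e x) ∨ ReflTransGen E (e x) x) : A = B := by
  classical
  have heq_of_reach : ∀ x y : A,
      ReflTransGen E (reachMax E x (e x)) (reachMax E y (e y)) → x = y := by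
    intro x y hxy
    rcases reachMax_eq_or (E := E) y (e y) with hy | hy
    · have := (reflTransGen_reachMax_left (E := E) x (e x)).trans (hy ▸ hxy)
      exact Subtype.ext (hA.1.eq_of_reflTransGen x.2 y.2 this)
    · have := (reflTransGen_reachMax_right (he x)).trans (hy ▸ hxy)
      exact e.injective (Subtype.ext (hB.1.eq_of_reflTransGen (e x).2 (e y).2 this))
  set C := A.attach.image fun x : A => reachMax E x (e x)
  have hC : IsAC E C := by
    simp only [IsAC, C, Finset.mem_image, Finset.mem_attach, true_and]
    rintro _ ⟨x, rfl⟩ _ ⟨y, rfl⟩ hne hxy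
    rw [heq_of_reach x y hxy] at hne
    exact hne rfl
  have hCcard : C.card = A.card := by
    rw [Finset.card_image_of_injective _ fun x y h => heq_of_reach x y (by rw [h]),
      Finset.card_attach]
  have hAB : A.card = B.card := by simpa using Fintype.card_congr e
  have hCA : Dom E C A := by
    refine ⟨hCcard, ?_⟩
    simp only [C, Finset.mem_image, Finset.mem_attach, true_and]
    rintro _ ⟨x, rfl⟩
    exact ⟨x, x.2, reflTransGen_reachMax_left _ _⟩
  have hCB : Dom E C B := by
    refine ⟨hCcard.trans hAB, ?_⟩
    simp only [C, Finset.mem_image, Finset.mem_attach, true_and]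
    rintro _ ⟨x, rfl⟩
    exact ⟨e x, (e x).2, reflTransGen_reachMax_right (he x)⟩
  exact (hA.eq_of_dom hC hCA).symm.trans (hB.eq_of_dom hC hCB)

theorem Frontier.eq_of_bijOn_paths {ι : Type*} {P : ι → List V} (hchain : ∀ i, (P i).IsChain E)
    {S : Set ι} {A B : Finset V} (hA : Frontier E A) (hB : Frontier E B) {f g : V → ι}
    (hf : Set.BijOn f A S) (hg : Set.BijOn g B S) (hfP : ∀ a ∈ A, a ∈ P (f a))
    (hgP : ∀ b ∈ B, b ∈ P (g b)) : A = B := by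
  refine hA.eq_of_comparable_equiv hB ((hf.equiv f).trans (hg.equiv g).symm) fun x => ?_
  set y := (hf.equiv f).trans (hg.equiv g).symm x
  have hy : g y = f x := congrArg Subtype.val ((hg.equiv g).apply_symm_apply _)
  exact (hchain (f x)).reflTransGen_or (hfP x x.2) (hy ▸ hgP y y.2)

theorem ncard_frontier_le {ι : Type*} [Fintype ι] {P : ι → List V}
    (hchain : ∀ i, (P i).IsChain E) (hcover : ∀ v, ∃ i, v ∈ P i) :
    {A | Frontier E A}.ncard ≤ 2 ^ Fintype.card ι := by
  classical
  choose p hp using hcover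
  have hbij : ∀ {A}, Frontier E A → Set.BijOn p A (A.image p) := fun hA => by
    rw [Finset.coe_image]
    exact (hA.1.injOn_of_mem_chains hchain fun a _ => hp a).bijOn_image
  have hinj : Set.InjOn (fun A => A.image p) {A | Frontier E A} := by
    intro A hA B hB (hAB : A.image p = B.image p)
    exact hA.eq_of_bijOn_paths hchain hB (hbij hA) (hAB ▸ hbij hB) (fun a _ => hp a)
      fun b _ => hp b
  calc {A | Frontier E A}.ncard = ((fun A => A.image p) '' {A | Frontier E A}).ncard :=
        hinj.ncard_image.symm
    _ ≤ (Set.univ : Set (Finset ι)).ncard := Set.ncard_le_ncard (Set.subset_univ _)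
    _ = 2 ^ Fintype.card ι := by simp [Set.ncard_univ]

end

theorem frontier_per_path_subset_general {V : Type*}
    (E : V → V → Prop) (k : ℕ) (P : Fin k → List V)
    (hchain : ∀ i, (P i).Chain' E)
    (hcover : ∀ v : V, ∃ i, v ∈ P i) :
    (∀ S : Finset (Fin k), ∀ A B : Finset V, Frontier E A → Frontier E B →
      (∃ f : V → Fin k, (∀ a ∈ A, f a ∈ S ∧ a ∈ P (f a)) ∧
        (∀ a ∈ A, ∀ a' ∈ A, f a = f a' → a = a') ∧ (∀ i ∈ S, ∃ a ∈ A, f a = i)) →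
      (∃ g : V → Fin k, (∀ b ∈ B, g b ∈ S ∧ b ∈ P (g b)) ∧
        (∀ b ∈ B, ∀ b' ∈ B, g b = g b' → b = b') ∧ (∀ i ∈ S, ∃ b ∈ B, g b = i)) →
      A = B) ∧
    {A : Finset V | Frontier E A}.ncard ≤ 2 ^ k := by
  refine ⟨?_, by simpa using ncard_frontier_le hchain hcover⟩
  rintro S A B hA hB ⟨f, hfS, hf_inj, hf_surj⟩ ⟨g, hgS, hg_inj, hg_surj⟩
  exact hA.eq_of_bijOn_paths (S := S) hchain hB ⟨fun a ha => (hfS a ha).1, hf_inj, hf_surj⟩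
    ⟨fun b hb => (hgS b hb).1, hg_inj, hg_surj⟩ (fun a ha => (hfS a ha).2)
    fun b hb => (hgS b hb).2

/-- for each subset `S` of the paths of a path cover of size `k`,
there is at most one frontier antichain with exactly one vertex on each path of `S`;
consequently there are at most `2^k` frontier antichains. -/
theorem frontier_per_path_subset {V : Type*} [Fintype V] [DecidableEq V]
    (E : V → V → Prop) (hE : Acyclic E) (k : ℕ) (P : Fin k → List V)
    (hchain : ∀ i, (P i).Chain' E)
    (hcover : ∀ v : V, ∃ i, v ∈ P i) :
    (∀ S : Finset (Fin k), ∀ A B : Finset V, Frontier E A → Frontier E B →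
      (∃ f : V → Fin k, (∀ a ∈ A, f a ∈ S ∧ a ∈ P (f a)) ∧
        (∀ a ∈ A, ∀ a' ∈ A, f a = f a' → a = a') ∧ (∀ i ∈ S, ∃ a ∈ A, f a = i)) →
      (∃ g : V → Fin k, (∀ b ∈ B, g b ∈ S ∧ b ∈ P (g b)) ∧
        (∀ b ∈ B, ∀ b' ∈ B, g b = g b' → b = b') ∧ (∀ i ∈ S, ∃ b ∈ B, g b = i)) →
      A = B) ∧
    {A : Finset V | Frontier E A}.ncard ≤ 2 ^ k :=
  frontier_per_path_subset_general E k P hchain hcover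
end

section
/- (Type 1 lemma) Let G be a DAG with topological order v_1,...,v_n, let G_i = G[{v_1,...,v_i}], and let A be a frontier antichain of G_i with v_i ∈ A. Then A \ {v_i} is a frontier antichain of G_{i-1}. -/
open Relation

/-!
If `A \ {v_i}` were dominated in `G_i` by some antichain `B`, then `B ∪ {v_i}` would dominate `A`
in `G_{i+1}`. It is an antichain there because `v_i` is a sink of `G_{i+1}` and no vertex of `B`
reaches `v_i`: such a path, preceded by the one from `A \ {v_i}` to `B`, would join two vertices
of `A`. Paths of `G_{i+1}` between vertices of `G_i` stay in `G_i`, since indices increase along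
edges.
-/

section Reachability

variable {n : ℕ} {E : Fin n → Fin n → Prop}

theorem Topo.le_of_reflTransGen_erest (hE : Topo E) {j : ℕ} {u w : Fin n}
    (h : ReflTransGen (Erest E j) u w) : (u : ℕ) ≤ w := by
  induction h with
  | refl => exact le_rfl
  | tail _ hstep ih => exact ih.trans (hE _ _ hstep.1).le

theorem erest_mono {i j : ℕ} (hij : i ≤ j) : Erest E i ≤ Erest E j :=
  fun _ _ ⟨he, hu, hw⟩ => ⟨he, hu.trans_le hij, hw.trans_le hij⟩

theorem Topo.reflTransGen_erest_of_lt (hE : Topo E) {i j : ℕ} {u w : Fin n}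
    (h : ReflTransGen (Erest E j) u w) (hw : (w : ℕ) < i) : ReflTransGen (Erest E i) u w := by
  induction h using ReflTransGen.head_induction_on with
  | refl => exact .refl
  | head hstep hrest ih =>
    have hc := (hE.le_of_reflTransGen_erest hrest).trans_lt hw
    exact .head ⟨hstep.1, (hE _ _ hstep.1).trans hc, hc⟩ ih

theorem Topo.eq_of_reflTransGen_erest_succ (hE : Topo E) {i : ℕ} (hi : i < n) {w : Fin n}
    (h : ReflTransGen (Erest E (i + 1)) ⟨i, hi⟩ w) : w = ⟨i, hi⟩ := by
  rcases h.cases_head with h | ⟨c, hstep, _⟩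
  · exact h.symm
  · have hic : i < (c : ℕ) := hE _ _ hstep.1
    exact absurd hstep.2.2 (by omega)

theorem Topo.isAC_erest_of_lt (hE : Topo E) {i j : ℕ} {B : Finset (Fin n)}
    (hB : IsAC (Erest E i) B) (hBlt : ∀ b ∈ B, (b : ℕ) < i) : IsAC (Erest E j) B :=
  fun a ha b hb hab hr => hB a ha b hb hab (hE.reflTransGen_erest_of_lt hr (hBlt b hb))

end Reachability

section Antichains

variable {V : Type*}

theorem IsAC.mono {r s : V → V → Prop} {A B : Finset V} (hA : IsAC s A) (hBA : B ⊆ A)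
    (hrs : r ≤ s) : IsAC r B :=
  fun a ha b hb hab hr => hA a (hBA ha) b (hBA hb) hab (ReflTransGen.mono hrs a b hr)

theorem IsAC.insert [DecidableEq V] {r : V → V → Prop} {B : Finset V} {v : V} (hB : IsAC r B)
    (hsink : ∀ w, ReflTransGen r v w → w = v) (hnot : ∀ b ∈ B, ¬ ReflTransGen r b v) :
    IsAC r (insert v B) := by
  intro a ha b hb hab hr
  rcases Finset.mem_insert.mp ha with hav | haB <;> rcases Finset.mem_insert.mp hb with hbv | hbB
  · exact hab (hav.trans hbv.symm)
  · exact hab (hav.trans (hsink b (hav ▸ hr)).symm)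
  · exact hnot a haB (hbv ▸ hr)
  · exact hB a haB b hbB hab hr

theorem Dom.insert_of_erase [DecidableEq V] {r s : V → V → Prop} {A B : Finset V} {v : V}
    (hBA : Dom r B (A.erase v)) (hv : v ∈ A) (hvB : v ∉ B)
    (hrs : r ≤ s) : Dom s (insert v B) A := by
  obtain ⟨hcard, hreach⟩ := hBA
  refine ⟨?_, ?_⟩
  · rw [Finset.card_insert_of_notMem hvB, hcard, Finset.card_erase_add_one hv]
  · intro b hb
    rcases Finset.mem_insert.mp hb with rfl | hb
    · exact ⟨b, hv, .refl⟩
    · obtain ⟨a, ha, hab⟩ := hreach b hb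
      exact ⟨a, Finset.mem_of_mem_erase ha, ReflTransGen.mono hrs a b hab⟩

end Antichains

/-- Type 1: if `A` is a frontier antichain of `G_{i+1}` containing the
new vertex `v_i = ⟨i, hi⟩`, then `A \ {v_i}` is a frontier antichain of `G_i`. -/
theorem type1 {n : ℕ} (E : Fin n → Fin n → Prop) (hE : Topo E)
    (i : ℕ) (hi : i < n) (A : Finset (Fin n))
    (hA : FrontierIn E (i + 1) A) (hv : (⟨i, hi⟩ : Fin n) ∈ A) :
    FrontierIn E i (A.erase ⟨i, hi⟩) := by
  set v : Fin n := ⟨i, hi⟩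
  obtain ⟨hAlt, hAac, hAfr⟩ := hA
  have lift : Erest E i ≤ Erest E (i + 1) := erest_mono i.le_succ
  refine ⟨fun a ha => ?_, hAac.mono (A.erase_subset v) lift, ?_⟩
  · have : (a : ℕ) ≠ i := fun h => Finset.ne_of_mem_erase ha (Fin.ext h)
    have := hAlt a (Finset.mem_of_mem_erase ha)
    omega
  intro B hBlt hBac hBne hdom
  have hvB : v ∉ B := fun h => (hBlt v h).false
  have hnot : ∀ b ∈ B, ¬ ReflTransGen (Erest E (i + 1)) b v := fun b hb hbv => by
    obtain ⟨a, ha, hab⟩ := hdom.2 b hb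
    exact hAac a (Finset.mem_of_mem_erase ha) v hv (Finset.ne_of_mem_erase ha)
      ((ReflTransGen.mono lift a b hab).trans hbv)
  refine hAfr (insert v B) ?_ ?_ ?_ (hdom.insert_of_erase hv hvB lift)
  · intro b hb
    rcases Finset.mem_insert.mp hb with rfl | hb
    · exact Nat.lt_succ_self i
    · exact (hBlt b hb).trans (Nat.lt_succ_self i)
  · exact (hE.isAC_erest_of_lt hBac hBlt).insert
      (fun _ => hE.eq_of_reflTransGen_erest_succ hi) hnot
  · rintro rfl
    exact hBne (Finset.erase_insert hvB).symm
end

section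
/- A DAG of width k has at most 2^k frontier antichains. -/
open Relation

/-!
By Dilworth's theorem the vertices are covered by `k` chains, and an antichain meets each chain
at most once, so it determines the set of chains it meets. Two frontier antichains `A`, `B`
meeting the same chains coincide: keeping the higher of the two elements on each chain gives an
antichain of size `|A|` that dominates `A`, hence equals `A`, and symmetrically equals `B`.
So there are at most `2 ^ k` frontier antichains.
-/

open Finset

section Dilworth

variable {α : Type*} [PartialOrder α]

/-- A partition of `S` into at most `k` chains, encoded as a colouring by `0, …, k - 1`. -/
structure IsChainColoring (S : Finset α) (k : ℕ) (c : α → ℕ) : Prop where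
  lt : ∀ x ∈ S, c x < k
  comparable : ∀ x ∈ S, ∀ y ∈ S, c x = c y → x ≤ y ∨ y ≤ x

namespace IsChainColoring

variable {S A : Finset α} {k : ℕ} {c : α → ℕ}

lemma mono {l : ℕ} (hc : IsChainColoring S k c) (hkl : k ≤ l) : IsChainColoring S l c :=
  ⟨fun x hx => (hc.lt x hx).trans_le hkl, hc.comparable⟩

lemma injOn_of_isAntichain (hc : IsChainColoring S k c) (hAS : A ⊆ S)
    (hA : IsAntichain (· ≤ ·) (A : Set α)) : Set.InjOn c A := by
  intro x hx y hy hxy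
  rcases hc.comparable x (hAS hx) y (hAS hy) hxy with h | h
  · exact hA.eq hx hy h
  · exact hA.eq' hx hy h

lemma exists_mem_color_eq_of_card_eq (hc : IsChainColoring S k c) (hAS : A ⊆ S)
    (hA : IsAntichain (· ≤ ·) (A : Set α)) (hAk : #A = k) {x : α} (hx : x ∈ S) :
    ∃ a ∈ A, c a = c x := by
  have himage : A.image c = range k := by
    refine eq_of_subset_of_card_le (fun j hj => ?_) ?_
    · obtain ⟨a, ha, rfl⟩ := mem_image.mp hj
      exact mem_range.mpr (hc.lt a (hAS ha))
    · rw [card_image_of_injOn (hc.injOn_of_isAntichain hAS hA), card_range, hAk]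
  rw [← mem_image, himage]
  exact mem_range.mpr (hc.lt x hx)

lemma le_of_color_eq (hc : IsChainColoring S k c) (hAS : A ⊆ S)
    (hA : IsAntichain (· ≤ ·) (A : Set α)) {x a : α} (hx : x ∈ S) (hxA : ∃ a' ∈ A, x ≤ a')
    (ha : a ∈ A) (hxa : c x = c a) : x ≤ a := by
  obtain ⟨a', ha', hxa'⟩ := hxA
  rcases hc.comparable x hx a (hAS ha) hxa with h | h
  · exact h
  · rwa [hA.eq ha ha' (h.trans hxa')]

lemma ge_of_color_eq (hc : IsChainColoring S k c) (hAS : A ⊆ S)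
    (hA : IsAntichain (· ≤ ·) (A : Set α)) {x a : α} (hx : x ∈ S) (hxA : ∃ a' ∈ A, a' ≤ x)
    (ha : a ∈ A) (hxa : c x = c a) : a ≤ x := by
  obtain ⟨a', ha', ha'x⟩ := hxA
  rcases hc.comparable x hx a (hAS ha) hxa with h | h
  · rwa [← hA.eq ha' ha (ha'x.trans h)]
  · exact h

end IsChainColoring

lemma exists_isAntichain_forall_card_le (S : Finset α) :
    ∃ A ⊆ S, IsAntichain (· ≤ ·) (A : Set α) ∧
      ∀ B ⊆ S, IsAntichain (· ≤ ·) (B : Set α) → #B ≤ #A := by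
  classical
  obtain ⟨A, hA, hmax⟩ := exists_max_image
    (S.powerset.filter fun A : Finset α => IsAntichain (· ≤ ·) (A : Set α)) card ⟨∅, by simp⟩
  simp only [mem_filter, mem_powerset] at hA hmax
  exact ⟨A, hA.1, hA.2, fun B hBS hB => hmax B ⟨hBS, hB⟩⟩

variable [DecidableEq α]

lemma exists_mem_le_or_le_of_forall_card_le {S A : Finset α} (hA : IsAntichain (· ≤ ·) (A : Set α))
    (hmax : ∀ B ⊆ S, IsAntichain (· ≤ ·) (B : Set α) → #B ≤ #A) (hAS : A ⊆ S) {x : α}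
    (hx : x ∈ S) : ∃ a ∈ A, x ≤ a ∨ a ≤ x := by
  by_contra! hxA
  have hxA' : x ∉ A := fun h => (hxA x h).1 le_rfl
  have hins : IsAntichain (· ≤ ·) (insert x A : Set α) :=
    hA.insert (fun a ha _ => (hxA a ha).2) (fun a ha _ => (hxA a ha).1)
  have := hmax (insert x A) (insert_subset hx hAS) (by simpa using hins)
  rw [card_insert_of_notMem hxA'] at this
  omega

/-- The chain `{b, m}`, with `m` maximal and `b ≤ m` minimal, works. -/
lemma exists_chain_inter_nonempty {S : Finset α} {k : ℕ} (hS : S.Nonempty)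
    (h : ∀ A ⊆ S, IsAntichain (· ≤ ·) (A : Set α) → #A = k →
      (∀ x ∈ S, ∃ a ∈ A, x ≤ a) ∨ ∀ x ∈ S, ∃ a ∈ A, a ≤ x) :
    ∃ K ⊆ S, K.Nonempty ∧ IsChain (· ≤ ·) (K : Set α) ∧
      ∀ A ⊆ S, IsAntichain (· ≤ ·) (A : Set α) → #A = k → (A ∩ K).Nonempty := by
  obtain ⟨m, hm⟩ := S.exists_maximal hS
  obtain ⟨b, hbm, hb⟩ := S.exists_le_minimal hm.1
  refine ⟨{b, m}, insert_subset hb.1 (singleton_subset_iff.mpr hm.1), insert_nonempty _ _,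
    by simpa using IsChain.pair hbm, fun A hAS hA hAk => ?_⟩
  rcases h A hAS hA hAk with hlower | hupper
  · obtain ⟨a, ha, hma⟩ := hlower m hm.1
    rw [hm.eq_of_le (hAS ha) hma]
    exact ⟨a, mem_inter.mpr ⟨ha, by simp⟩⟩
  · obtain ⟨a, ha, hab⟩ := hupper b hb.1
    rw [hb.eq_of_ge (hAS ha) hab]
    exact ⟨a, mem_inter.mpr ⟨ha, by simp⟩⟩

lemma IsChainColoring.ite_mem {S K : Finset α} {k : ℕ} {c : α → ℕ}
    (hc : IsChainColoring (S \ K) k c) (hK : IsChain (· ≤ ·) (K : Set α)) :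
    IsChainColoring S (k + 1) fun x => if x ∈ K then k else c x := by
  constructor
  · intro x hx
    split_ifs with hxK
    · exact k.lt_succ_self
    · exact (hc.lt x (mem_sdiff.mpr ⟨hx, hxK⟩)).trans k.lt_succ_self
  · intro x hx y hy hxy
    by_cases hxK : x ∈ K <;> by_cases hyK : y ∈ K <;> simp only [hxK, hyK, if_true, if_false] at hxy
    · exact hK.total hxK hyK
    · exact absurd hxy (hc.lt y (mem_sdiff.mpr ⟨hy, hyK⟩)).ne'
    · exact absurd hxy (hc.lt x (mem_sdiff.mpr ⟨hx, hxK⟩)).ne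
    · exact hc.comparable x (mem_sdiff.mpr ⟨hx, hxK⟩) y (mem_sdiff.mpr ⟨hy, hyK⟩) hxy

/-- Perles' gluing step: `k` chains below a `k`-antichain `A` and `k` chains above it pair up
through the elements of `A`. -/
lemma exists_isChainColoring_union {A D U : Finset α} {k : ℕ} {cD cU : α → ℕ}
    (hA : IsAntichain (· ≤ ·) (A : Set α)) (hAk : #A = k) (hAD : A ⊆ D) (hAU : A ⊆ U)
    (hD : ∀ x ∈ D, ∃ a ∈ A, x ≤ a) (hU : ∀ x ∈ U, ∃ a ∈ A, a ≤ x)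
    (hcD : IsChainColoring D k cD) (hcU : IsChainColoring U k cU) :
    ∃ c, IsChainColoring (D ∪ U) k c := by
  choose! anchor hanchorA hanchor using
    fun x (hx : x ∈ U) => hcU.exists_mem_color_eq_of_card_eq hAU hA hAk hx
  have hbelow : ∀ x ∈ D, ∀ a ∈ A, cD x = cD a → x ≤ a := fun x hx a ha =>
    hcD.le_of_color_eq hAD hA hx (hD x hx) ha
  have habove : ∀ y ∈ U, anchor y ≤ y := fun y hy =>
    hcU.ge_of_color_eq hAU hA hy (hU y hy) (hanchorA y hy) (hanchor y hy).symm
  refine ⟨fun x => if x ∈ D then cD x else cD (anchor x), ?_, ?_⟩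
  · intro x hx
    split_ifs with hxD
    · exact hcD.lt x hxD
    · exact hcD.lt _ (hAD (hanchorA x ((mem_union.mp hx).resolve_left hxD)))
  · intro x hx y hy hxy
    by_cases hxD : x ∈ D <;> by_cases hyD : y ∈ D <;> simp only [hxD, hyD, if_true, if_false] at hxy
    · exact hcD.comparable x hxD y hyD hxy
    · have hyU := (mem_union.mp hy).resolve_left hyD
      exact .inl ((hbelow x hxD _ (hanchorA y hyU) hxy).trans (habove y hyU))
    · have hxU := (mem_union.mp hx).resolve_left hxD
      exact .inr ((hbelow y hyD _ (hanchorA x hxU) hxy.symm).trans (habove x hxU))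
    · have hxU := (mem_union.mp hx).resolve_left hxD
      have hyU := (mem_union.mp hy).resolve_left hyD
      have := hcD.injOn_of_isAntichain hAD hA (hanchorA x hxU) (hanchorA y hyU) hxy
      exact hcU.comparable x hxU y hyU (by rw [← hanchor x hxU, ← hanchor y hyU, this])

lemma exists_isChainColoring_of_split {S A : Finset α}
    (ih : ∀ T ⊂ S, ∀ k, (∀ B ⊆ T, IsAntichain (· ≤ ·) (B : Set α) → #B ≤ k) →
      ∃ c, IsChainColoring T k c)
    (hAS : A ⊆ S) (hA : IsAntichain (· ≤ ·) (A : Set α))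
    (hmax : ∀ B ⊆ S, IsAntichain (· ≤ ·) (B : Set α) → #B ≤ #A)
    (hlower : ∃ x ∈ S, ∀ a ∈ A, ¬ x ≤ a) (hupper : ∃ x ∈ S, ∀ a ∈ A, ¬ a ≤ x) :
    ∃ c, IsChainColoring S #A c := by
  classical
  set D := S.filter fun x => ∃ a ∈ A, x ≤ a
  set U := S.filter fun x => ∃ a ∈ A, a ≤ x
  have hDU : D ∪ U = S := by
    refine (union_subset (filter_subset _ _) (filter_subset _ _)).antisymm fun x hx => ?_
    obtain ⟨a, ha, hxa | hax⟩ := exists_mem_le_or_le_of_forall_card_le hA hmax hAS hx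
    · exact mem_union_left _ (mem_filter.mpr ⟨hx, a, ha, hxa⟩)
    · exact mem_union_right _ (mem_filter.mpr ⟨hx, a, ha, hax⟩)
  obtain ⟨cD, hcD⟩ := ih D (filter_ssubset.mpr (by simpa using hlower)) #A
    fun B hB => hmax B (hB.trans (filter_subset _ _))
  obtain ⟨cU, hcU⟩ := ih U (filter_ssubset.mpr (by simpa using hupper)) #A
    fun B hB => hmax B (hB.trans (filter_subset _ _))
  rw [← hDU]
  exact exists_isChainColoring_union hA rfl
    (fun a ha => mem_filter.mpr ⟨hAS ha, a, ha, le_rfl⟩)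
    (fun a ha => mem_filter.mpr ⟨hAS ha, a, ha, le_rfl⟩)
    (fun x hx => (mem_filter.mp hx).2) (fun x hx => (mem_filter.mp hx).2) hcD hcU

lemma exists_isChainColoring_of_forall_lower_or_upper {S : Finset α} {w : ℕ} (hS : S.Nonempty)
    (ih : ∀ T ⊂ S, ∀ k, (∀ B ⊆ T, IsAntichain (· ≤ ·) (B : Set α) → #B ≤ k) →
      ∃ c, IsChainColoring T k c)
    (hw : ∀ B ⊆ S, IsAntichain (· ≤ ·) (B : Set α) → #B ≤ w)
    (h : ∀ A ⊆ S, IsAntichain (· ≤ ·) (A : Set α) → #A = w →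
      (∀ x ∈ S, ∃ a ∈ A, x ≤ a) ∨ ∀ x ∈ S, ∃ a ∈ A, a ≤ x) :
    ∃ c, IsChainColoring S w c := by
  obtain ⟨K, hKS, hKne, hK, hKA⟩ := exists_chain_inter_nonempty hS h
  obtain ⟨x, hx⟩ := hS
  have hw_pos : 0 < w := hw {x} (singleton_subset_iff.mpr hx) (by simp)
  have hwidth : ∀ B ⊆ S \ K, IsAntichain (· ≤ ·) (B : Set α) → #B ≤ w - 1 := by
    intro B hB hBac
    have hBK : ¬ (B ∩ K).Nonempty := by
      rw [not_nonempty_iff_eq_empty, ← disjoint_iff_inter_eq_empty]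
      exact disjoint_of_subset_left hB sdiff_disjoint
    have hBw := hw B (hB.trans sdiff_subset) hBac
    have hBw' : #B ≠ w := fun h => hBK (hKA B (hB.trans sdiff_subset) hBac h)
    omega
  obtain ⟨c, hc⟩ := ih (S \ K) (sdiff_ssubset hKS hKne) (w - 1) hwidth
  exact ⟨_, Nat.sub_add_cancel hw_pos ▸ hc.ite_mem hK⟩

theorem exists_isChainColoring (S : Finset α) (k : ℕ)
    (hS : ∀ A ⊆ S, IsAntichain (· ≤ ·) (A : Set α) → #A ≤ k) : ∃ c, IsChainColoring S k c := by
  induction S using Finset.strongInduction generalizing k with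
  | H S ih =>
  obtain ⟨A₀, hA₀S, hA₀, hmax⟩ := exists_isAntichain_forall_card_le S
  suffices ∃ c, IsChainColoring S #A₀ c by
    obtain ⟨c, hc⟩ := this
    exact ⟨c, hc.mono (hS A₀ hA₀S hA₀)⟩
  rcases S.eq_empty_or_nonempty with rfl | hSne
  · exact ⟨0, ⟨by simp, by simp⟩⟩
  by_cases hextreme : ∀ A ⊆ S, IsAntichain (· ≤ ·) (A : Set α) → #A = #A₀ →
      (∀ x ∈ S, ∃ a ∈ A, x ≤ a) ∨ ∀ x ∈ S, ∃ a ∈ A, a ≤ x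
  · exact exists_isChainColoring_of_forall_lower_or_upper hSne ih hmax hextreme
  · push Not at hextreme
    obtain ⟨A, hAS, hA, hAw, hlower, hupper⟩ := hextreme
    rw [← hAw] at hmax ⊢
    exact exists_isChainColoring_of_split ih hAS hA hmax hlower hupper

end Dilworth

section ColorTops

variable {α : Type*} [PartialOrder α] {c : α → ℕ} {S X A B : Finset α} {k : ℕ}

open Classical in
noncomputable def colorTops (c : α → ℕ) (X : Finset α) : Finset α :=
  {v ∈ X | ∀ w ∈ X, c w = c v → w ≤ v}

lemma mem_colorTops {v : α} : v ∈ colorTops c X ↔ v ∈ X ∧ ∀ w ∈ X, c w = c v → w ≤ v := by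
  simp [colorTops]

lemma colorTops_subset : colorTops c X ⊆ X := fun _ hv => (mem_colorTops.mp hv).1

lemma injOn_colorTops : Set.InjOn c (colorTops c X) := fun v hv w hw hvw =>
  le_antisymm ((mem_colorTops.mp hw).2 v (mem_colorTops.mp hv).1 hvw)
    ((mem_colorTops.mp hv).2 w (mem_colorTops.mp hw).1 hvw.symm)

lemma exists_le_of_mem_colorTops {t : α} (ht : t ∈ colorTops c X) {Y : Finset α} (hYX : Y ⊆ X)
    (hXY : X.image c ⊆ Y.image c) : ∃ y ∈ Y, c y = c t ∧ y ≤ t := by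
  obtain ⟨y, hy, hyt⟩ := mem_image.mp (hXY (mem_image_of_mem c (colorTops_subset ht)))
  exact ⟨y, hy, hyt, (mem_colorTops.mp ht).2 y (hYX hy) hyt⟩

/-- Every colour class of `X` is a finite chain, so it has a top element. -/
lemma image_colorTops (hc : IsChainColoring S k c) (hXS : X ⊆ S) :
    (colorTops c X).image c = X.image c := by
  classical
  refine (image_subset_image colorTops_subset).antisymm fun j hj => ?_
  obtain ⟨x, hx, rfl⟩ := mem_image.mp hj
  obtain ⟨t, -, ht⟩ := (X.filter fun y => c y = c x).exists_le_maximal (mem_filter.mpr ⟨hx, rfl⟩)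
  obtain ⟨htX, hct⟩ := mem_filter.mp ht.1
  refine mem_image.mpr ⟨t, mem_colorTops.mpr ⟨htX, fun w hw hwt => ?_⟩, hct⟩
  rcases hc.comparable w (hXS hw) t (hXS htX) hwt with hle | hle
  · exact hle
  · exact ht.2 (mem_filter.mpr ⟨hw, hwt.trans hct⟩) hle

variable [DecidableEq α]

lemma isAntichain_colorTops_union (hA : IsAntichain (· ≤ ·) (A : Set α))
    (hB : IsAntichain (· ≤ ·) (B : Set α)) (himg : A.image c = B.image c) :
    IsAntichain (· ≤ ·) (colorTops c (A ∪ B) : Set α) := by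
  intro t ht t' ht' hne hle
  have hct : c t ≠ c t' := fun h =>
    hne (le_antisymm hle ((mem_colorTops.mp ht).2 t' (colorTops_subset ht') h.symm))
  have hA' : (A ∪ B).image c ⊆ A.image c := by rw [image_union, ← himg, union_self]
  have hB' : (A ∪ B).image c ⊆ B.image c := by rw [image_union, himg, union_self]
  rcases mem_union.mp (colorTops_subset ht') with ht'A | ht'B
  · obtain ⟨y, hy, hyt, hyle⟩ := exists_le_of_mem_colorTops ht subset_union_left hA'
    exact hA hy ht'A (by rintro rfl; exact hct hyt.symm) (hyle.trans hle)
  · obtain ⟨y, hy, hyt, hyle⟩ := exists_le_of_mem_colorTops ht subset_union_right hB'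
    exact hB hy ht'B (by rintro rfl; exact hct hyt.symm) (hyle.trans hle)

/-- Taking the top of each colour class of `A ∪ B` gives an antichain of the same size as `A`
dominating `A`. -/
lemma colorTops_union_eq_left (hc : IsChainColoring S k c) (hAS : A ⊆ S) (hBS : B ⊆ S)
    (hA : IsAntichain (· ≤ ·) (A : Set α)) (hB : IsAntichain (· ≤ ·) (B : Set α))
    (himg : A.image c = B.image c)
    (hAfront : ∀ T : Finset α, IsAntichain (· ≤ ·) (T : Set α) → T ≠ A →
      ¬ (#T = #A ∧ ∀ t ∈ T, ∃ a ∈ A, a ≤ t)) :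
    colorTops c (A ∪ B) = A := by
  by_contra hne
  refine hAfront _ (isAntichain_colorTops_union hA hB himg) hne ⟨?_, fun t ht => ?_⟩
  · calc #(colorTops c (A ∪ B)) = #((colorTops c (A ∪ B)).image c) :=
          (card_image_of_injOn injOn_colorTops).symm
      _ = #(A.image c) := by
          rw [image_colorTops hc (union_subset hAS hBS), image_union, himg, union_self]
      _ = #A := card_image_of_injOn (hc.injOn_of_isAntichain hAS hA)
  · obtain ⟨a, ha, -, hat⟩ := exists_le_of_mem_colorTops ht subset_union_left
      (by rw [image_union, ← himg, union_self])
    exact ⟨a, ha, hat⟩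

lemma eq_of_image_eq_of_not_dominated (hc : IsChainColoring S k c) (hAS : A ⊆ S) (hBS : B ⊆ S)
    (hA : IsAntichain (· ≤ ·) (A : Set α)) (hB : IsAntichain (· ≤ ·) (B : Set α))
    (hAfront : ∀ T : Finset α, IsAntichain (· ≤ ·) (T : Set α) → T ≠ A →
      ¬ (#T = #A ∧ ∀ t ∈ T, ∃ a ∈ A, a ≤ t))
    (hBfront : ∀ T : Finset α, IsAntichain (· ≤ ·) (T : Set α) → T ≠ B →
      ¬ (#T = #B ∧ ∀ t ∈ T, ∃ b ∈ B, b ≤ t))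
    (himg : A.image c = B.image c) : A = B := by
  calc A = colorTops c (A ∪ B) := (colorTops_union_eq_left hc hAS hBS hA hB himg hAfront).symm
    _ = B := by
      rw [union_comm]
      exact colorTops_union_eq_left hc hBS hAS hB hA himg.symm hBfront

end ColorTops

abbrev Acyclic.reachabilityOrder {V : Type*} {E : V → V → Prop} (hE : Acyclic E) :
    PartialOrder V where
  le := ReflTransGen E
  le_refl _ := ReflTransGen.refl
  le_trans _ _ _ := ReflTransGen.trans
  le_antisymm a b hab hba := by
    rcases reflTransGen_iff_eq_or_transGen.mp hab with h | h
    · exact h.symm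
    · exact (hE a (h.trans_left hba)).elim

theorem frontier_count_general {V : Type*} [Fintype V] (E : V → V → Prop) (hE : Acyclic E)
    (k : ℕ)
    (hw1 : ∀ A : Finset V, IsAC E A → A.card ≤ k) :
    {A : Finset V | Frontier E A}.ncard ≤ 2 ^ k := by
  classical
  let _ := hE.reachabilityOrder
  -- For this order `IsAC E`, `Dom E` and `Frontier E` unfold to their order-theoretic forms.
  obtain ⟨c, hc⟩ := exists_isChainColoring (univ : Finset V) k fun A _ hA => hw1 A hA
  have hinj : Set.InjOn (fun A => A.image c) {A | Frontier E A} := fun A hA B hB himg =>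
    eq_of_image_eq_of_not_dominated hc (subset_univ A) (subset_univ B) hA.1 hB.1 hA.2 hB.2 himg
  have hmaps : ∀ A ∈ {A | Frontier E A}, A.image c ∈ ((range k).powerset : Set (Finset ℕ)) :=
    fun A _ => mem_coe.mpr <| mem_powerset.mpr fun j hj => by
      obtain ⟨a, -, rfl⟩ := mem_image.mp hj
      exact mem_range.mpr (hc.lt a (mem_univ a))
  calc {A : Finset V | Frontier E A}.ncard
      ≤ ((range k).powerset : Set (Finset ℕ)).ncard :=
        Set.ncard_le_ncard_of_injOn _ hmaps hinj (finite_toSet _)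
    _ = 2 ^ k := by rw [Set.ncard_coe_finset, card_powerset, card_range]

/-- a DAG of width `k` has at most `2^k` frontier antichains. -/
theorem frontier_count {V : Type*} [Fintype V] (E : V → V → Prop) (hE : Acyclic E)
    (k : ℕ)
    (hw1 : ∀ A : Finset V, IsAC E A → A.card ≤ k)
    (hw2 : ∃ A : Finset V, IsAC E A ∧ A.card = k) :
    {A : Finset V | Frontier E A}.ncard ≤ 2 ^ k :=
  frontier_count_general E hE k hw1
end
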